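/- Let θ : [0,∞) → ℝ^N solve the inertial Kuramoto model on a symmetric network with heterogeneous inertia and friction. Then the angular accelerations vanish asymptotically: lim_{t→∞} θ_i''(t) = 0 for each i = 1,…,N. -/

import Mathlib

/-!
The energy `E = ∑ᵢ mᵢ ωᵢ² / 2 + (1/2) ∑ᵢⱼ aᵢⱼ (1 - cos (θⱼ - θᵢ))` is nonnegative and, because
`a` is symmetric, `E' = -∑ᵢ γᵢ ωᵢ²`. So `E` decreases to a limit and the frequencies stay
bounded, hence so do the accelerations. Barbalat's lemma (if `f` converges and `f'` is uniformly
continuous then `f' → 0`) applied to `E` gives `ωᵢ → 0`. Differentiating the equation of motion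
shows that `αᵢ = ωᵢ'` has bounded derivative, so Barbalat's lemma applied to `ωᵢ` gives `αᵢ → 0`.
-/

open Filter Topology Set Asymptotics Real Finset

/-- Barbalat's lemma. -/
theorem tendsto_zero_of_hasDerivAt_of_uniformContinuousOn {f g : ℝ → ℝ} {a L : ℝ}
    (hf : ∀ t ≥ a, HasDerivAt f (g t) t) (hg : UniformContinuousOn g (Ici a))
    (hfL : Tendsto f atTop (𝓝 L)) : Tendsto g atTop (𝓝 0) := by
  refine Metric.tendsto_nhds.2 fun ε hε => ?_
  obtain ⟨δ, hδ, hgδ⟩ := Metric.uniformContinuousOn_iff.1 hg (ε / 2) (half_pos hε)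
  obtain ⟨h, hh, hhδ⟩ : ∃ h, 0 < h ∧ h < δ := ⟨δ / 2, half_pos hδ, half_lt_self hδ⟩
  have hincr : Tendsto (fun t => f (t + h) - f t) atTop (𝓝 0) := by
    simpa using (hfL.comp (tendsto_atTop_add_const_right _ h tendsto_id)).sub hfL
  filter_upwards [Metric.tendsto_nhds.1 hincr (h * (ε / 2)) (by positivity),
    eventually_ge_atTop a] with t hincr_t hat
  -- `g c` is a slope of `f` over `[t, t + h]`, and `g t` is close to `g c`.
  obtain ⟨c, ⟨htc, hch⟩, hc⟩ := exists_hasDerivAt_eq_slope f g (lt_add_of_pos_right t hh)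
    (fun s hs => (hf s (hat.trans hs.1)).continuousAt.continuousWithinAt)
    (fun s hs => hf s (hat.trans hs.1.le))
  have hgc : |g c| < ε / 2 := by
    rw [hc, add_sub_cancel_left, abs_div, abs_of_pos hh, div_lt_iff₀ hh, mul_comm]
    simpa using hincr_t
  have hgtc : |g t - g c| < ε / 2 := by
    refine hgδ t hat c (hat.trans htc.le) ?_
    rw [Real.dist_eq, abs_sub_comm, abs_of_pos (sub_pos.2 htc)]
    linarith
  rw [Real.dist_eq, sub_zero]
  linarith [abs_sub_abs_le_abs_sub (g t) (g c)]

theorem tendsto_zero_of_hasDerivAt_of_isBigO_deriv {f g g' : ℝ → ℝ} {L : ℝ}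
    (hf : ∀ᶠ t in atTop, HasDerivAt f (g t) t) (hg : ∀ᶠ t in atTop, HasDerivAt g (g' t) t)
    (hg' : g' =O[atTop] fun _ => (1 : ℝ)) (hfL : Tendsto f atTop (𝓝 L)) :
    Tendsto g atTop (𝓝 0) := by
  obtain ⟨C, hC⟩ := (isBigO_one_iff ℝ).1 hg'
  obtain ⟨a, ha⟩ := eventually_atTop.1 (hf.and (hg.and hC))
  have hlip : LipschitzOnWith C.toNNReal g (Ici a) :=
    (convex_Ici a).lipschitzOnWith_of_nnnorm_hasDerivWithin_le
      (fun t ht => (ha t ht).2.1.hasDerivWithinAt) fun t ht => by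
        have hCt : ‖g' t‖ ≤ C := (ha t ht).2.2
        rw [← NNReal.coe_le_coe, coe_nnnorm, Real.coe_toNNReal']
        exact le_max_of_le_left hCt
  exact tendsto_zero_of_hasDerivAt_of_uniformContinuousOn (fun t ht => (ha t ht).1)
    hlip.uniformContinuousOn hfL

lemma exists_tendsto_atTop_of_antitoneOn_Ici {f : ℝ → ℝ} {a c : ℝ} (hf : AntitoneOn f (Ici a))
    (hc : ∀ t ≥ a, c ≤ f t) : ∃ L, Tendsto f atTop (𝓝 L) := by
  have hanti : Antitone fun t => f (max t a) := fun s t hst =>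
    hf (le_max_right s a) (le_max_right t a) (max_le_max_right a hst)
  refine ⟨_, (tendsto_atTop_ciInf hanti ⟨c, ?_⟩).congr' ?_⟩
  · rintro _ ⟨t, rfl⟩
    exact hc _ (le_max_right t a)
  · filter_upwards [eventually_ge_atTop a] with t ht
    rw [max_eq_left ht]

noncomputable section Coupling

variable {ι : Type*} [Fintype ι]

def couplingForce (a : ι → ι → ℝ) (x : ι → ℝ) (i : ι) : ℝ := ∑ j, a i j * sin (x j - x i)

def couplingPotential (a : ι → ι → ℝ) (x : ι → ℝ) : ℝ :=
  (∑ i, ∑ j, a i j * (1 - cos (x j - x i))) / 2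

variable {a : ι → ι → ℝ}

lemma couplingPotential_nonneg (ha : ∀ i j, 0 ≤ a i j) (x : ι → ℝ) :
    0 ≤ couplingPotential a x :=
  div_nonneg (sum_nonneg fun i _ => sum_nonneg fun j _ =>
    mul_nonneg (ha i j) (sub_nonneg.2 (cos_le_one _))) zero_le_two

lemma abs_couplingForce_le (x : ι → ℝ) (i : ι) : |couplingForce a x i| ≤ ∑ j, |a i j| :=
  (abs_sum_le_sum_abs _ _).trans <| sum_le_sum fun j _ => by
    rw [abs_mul]
    exact mul_le_of_le_one_right (abs_nonneg _) (abs_sin_le_one _)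

lemma isBigO_couplingForce {α : Type*} {l : Filter α} (x : α → ι → ℝ) (i : ι) :
    (fun t => couplingForce a (x t) i) =O[l] fun _ => (1 : ℝ) :=
  IsBigO.of_bound _ (Eventually.of_forall fun t => by
    simpa only [norm_one, mul_one, Real.norm_eq_abs] using abs_couplingForce_le (x t) i)

lemma sum_sum_mul_sin_sub_mul_sub (hsym : ∀ i j, a i j = a j i) (x v : ι → ℝ) :
    ∑ i, ∑ j, a i j * (sin (x j - x i) * (v j - v i)) =
      -2 * ∑ i, v i * couplingForce a x i := by
  have hswap : ∑ i, ∑ j, a i j * sin (x j - x i) * v j = -∑ i, v i * couplingForce a x i := by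
    rw [sum_comm]
    simp only [couplingForce, mul_sum, ← sum_neg_distrib]
    refine sum_congr rfl fun i _ => sum_congr rfl fun j _ => ?_
    rw [hsym, ← neg_sub, sin_neg]
    ring
  have hdiag : ∑ i, ∑ j, a i j * sin (x j - x i) * v i = ∑ i, v i * couplingForce a x i := by
    simp only [couplingForce, mul_sum]
    exact sum_congr rfl fun i _ => sum_congr rfl fun j _ => by ring
  simp only [mul_sub, sum_sub_distrib, ← mul_assoc, hswap, hdiag]
  ring

variable {x : ℝ → ι → ℝ} {v : ι → ℝ} {t : ℝ}

lemma hasDerivAt_couplingForce (hx : ∀ i, HasDerivAt (fun s => x s i) (v i) t) (i : ι) :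
    HasDerivAt (fun s => couplingForce a (x s) i)
      (∑ j, a i j * (cos (x t j - x t i) * (v j - v i))) t :=
  HasDerivAt.fun_sum fun j _ => ((hx j).sub (hx i)).sin.const_mul (a i j)

lemma hasDerivAt_couplingPotential (hsym : ∀ i j, a i j = a j i)
    (hx : ∀ i, HasDerivAt (fun s => x s i) (v i) t) :
    HasDerivAt (fun s => couplingPotential a (x s)) (-∑ i, v i * couplingForce a (x t) i) t := by
  have h := (HasDerivAt.fun_sum (u := Finset.univ) fun i _ =>
    HasDerivAt.fun_sum (u := Finset.univ) fun j _ =>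
      (((hx j).sub (hx i)).cos.const_sub 1).const_mul (a i j)).div_const 2
  refine h.congr_deriv ?_
  simp only [Pi.sub_apply, neg_mul, neg_neg, sum_sum_mul_sin_sub_mul_sub hsym]
  ring

def kuramotoEnergy (m : ι → ℝ) (a : ι → ι → ℝ) (x v : ι → ℝ) : ℝ :=
  ∑ i, m i / 2 * v i ^ 2 + couplingPotential a x

variable {m : ι → ℝ}

lemma kuramotoEnergy_nonneg (hm : ∀ i, 0 ≤ m i) (ha : ∀ i j, 0 ≤ a i j) (x v : ι → ℝ) :
    0 ≤ kuramotoEnergy m a x v :=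
  add_nonneg (sum_nonneg fun i _ => by have := hm i; positivity) (couplingPotential_nonneg ha x)

lemma mul_sq_le_kuramotoEnergy (hm : ∀ i, 0 ≤ m i) (ha : ∀ i j, 0 ≤ a i j) (x v : ι → ℝ)
    (i : ι) : m i / 2 * v i ^ 2 ≤ kuramotoEnergy m a x v :=
  le_add_of_le_of_nonneg
    (single_le_sum (f := fun j => m j / 2 * v j ^ 2) (fun j _ => by have := hm j; positivity)
      (mem_univ i))
    (couplingPotential_nonneg ha x)

end Coupling

structure IsInertialKuramotoSolution {ι : Type*} [Fintype ι] (m γ : ι → ℝ) (a : ι → ι → ℝ)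
    (θ ω α : ℝ → ι → ℝ) : Prop where
  hasDerivAt_phase : ∀ t i, HasDerivAt (fun s => θ s i) (ω t i) t
  hasDerivAt_freq : ∀ t i, HasDerivAt (fun s => ω s i) (α t i) t
  ode : ∀ t ≥ 0, ∀ i, m i * α t i = -γ i * ω t i + couplingForce a (θ t) i

namespace IsInertialKuramotoSolution

variable {ι : Type*} [Fintype ι] {m γ : ι → ℝ} {a : ι → ι → ℝ} {θ ω α : ℝ → ι → ℝ}

lemma hasDerivAt_energy (hs : IsInertialKuramotoSolution m γ a θ ω α)
    (hsym : ∀ i j, a i j = a j i) {t : ℝ} (ht : 0 ≤ t) :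
    HasDerivAt (fun s => kuramotoEnergy m a (θ s) (ω s)) (-∑ i, γ i * ω t i ^ 2) t := by
  have hkin := HasDerivAt.fun_sum (u := Finset.univ) fun i _ =>
    ((hs.hasDerivAt_freq t i).pow 2).const_mul (m i / 2)
  refine (hkin.add (hasDerivAt_couplingPotential hsym (hs.hasDerivAt_phase t))).congr_deriv ?_
  simp only [← sum_neg_distrib, ← sum_add_distrib]
  refine sum_congr rfl fun i _ => ?_
  linear_combination ω t i * hs.ode t ht i

lemma antitoneOn_energy (hs : IsInertialKuramotoSolution m γ a θ ω α)
    (hsym : ∀ i j, a i j = a j i) (hγ : ∀ i, 0 ≤ γ i) :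
    AntitoneOn (fun t => kuramotoEnergy m a (θ t) (ω t)) (Ici 0) := by
  refine antitoneOn_of_hasDerivWithinAt_nonpos (f' := fun t => -∑ i, γ i * ω t i ^ 2)
    (convex_Ici 0) (fun t ht => (hs.hasDerivAt_energy hsym ht).continuousAt.continuousWithinAt)
    (fun t ht => ?_) fun t _ => neg_nonpos.2 (sum_nonneg fun i _ => by have := hγ i; positivity)
  rw [interior_Ici] at ht
  exact (hs.hasDerivAt_energy hsym ht.le).hasDerivWithinAt

lemma isBigO_freq (hs : IsInertialKuramotoSolution m γ a θ ω α) (hm : ∀ i, 0 < m i)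
    (ha : ∀ i j, 0 ≤ a i j) (hsym : ∀ i j, a i j = a j i) (hγ : ∀ i, 0 ≤ γ i) (i : ι) :
    (fun t => ω t i) =O[atTop] fun _ => (1 : ℝ) := by
  refine IsBigO.of_bound √(2 * kuramotoEnergy m a (θ 0) (ω 0) / m i) ?_
  filter_upwards [eventually_ge_atTop 0] with t ht
  rw [norm_one, mul_one, Real.norm_eq_abs]
  refine abs_le_sqrt ?_
  rw [le_div_iff₀ (hm i)]
  linarith [mul_sq_le_kuramotoEnergy (fun j => (hm j).le) ha (θ t) (ω t) i,
    hs.antitoneOn_energy hsym hγ self_mem_Ici ht ht]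

lemma eventuallyEq_accel (hs : IsInertialKuramotoSolution m γ a θ ω α) (hm : ∀ i, 0 < m i)
    (i : ι) :
    (fun t => α t i) =ᶠ[atTop] fun t => (m i)⁻¹ * (-γ i * ω t i + couplingForce a (θ t) i) := by
  filter_upwards [eventually_ge_atTop 0] with t ht
  rw [eq_inv_mul_iff_mul_eq₀ (hm i).ne', hs.ode t ht i]

lemma isBigO_accel (hs : IsInertialKuramotoSolution m γ a θ ω α) (hm : ∀ i, 0 < m i)
    (ha : ∀ i j, 0 ≤ a i j) (hsym : ∀ i j, a i j = a j i) (hγ : ∀ i, 0 ≤ γ i) (i : ι) :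
    (fun t => α t i) =O[atTop] fun _ => (1 : ℝ) :=
  ((((hs.isBigO_freq hm ha hsym hγ i).const_mul_left (-γ i)).add
    (isBigO_couplingForce θ i)).const_mul_left (m i)⁻¹).congr' (hs.eventuallyEq_accel hm i).symm
    EventuallyEq.rfl

lemma tendsto_dissipation (hs : IsInertialKuramotoSolution m γ a θ ω α) (hm : ∀ i, 0 < m i)
    (ha : ∀ i j, 0 ≤ a i j) (hsym : ∀ i j, a i j = a j i) (hγ : ∀ i, 0 ≤ γ i) :
    Tendsto (fun t => ∑ i, γ i * ω t i ^ 2) atTop (𝓝 0) := by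
  obtain ⟨L, hL⟩ := exists_tendsto_atTop_of_antitoneOn_Ici (hs.antitoneOn_energy hsym hγ)
    fun t _ => kuramotoEnergy_nonneg (fun i => (hm i).le) ha (θ t) (ω t)
  refine tendsto_zero_of_hasDerivAt_of_isBigO_deriv
    (f := fun t => -kuramotoEnergy m a (θ t) (ω t))
    (g' := fun t => ∑ i, 2 * γ i * (ω t i * α t i)) ?_ ?_ ?_ hL.neg
  · filter_upwards [eventually_ge_atTop 0] with t ht
    simpa only [neg_neg] using (hs.hasDerivAt_energy hsym ht).fun_neg
  · refine Eventually.of_forall fun t => (HasDerivAt.fun_sum fun i _ =>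
      ((hs.hasDerivAt_freq t i).pow 2).const_mul (γ i)).congr_deriv (sum_congr rfl fun i _ => ?_)
    ring
  · refine IsBigO.fun_sum fun i _ => IsBigO.const_mul_left ?_ _
    simpa using (hs.isBigO_freq hm ha hsym hγ i).mul (hs.isBigO_accel hm ha hsym hγ i)

lemma tendsto_freq (hs : IsInertialKuramotoSolution m γ a θ ω α) (hm : ∀ i, 0 < m i)
    (ha : ∀ i j, 0 ≤ a i j) (hsym : ∀ i j, a i j = a j i) (hγ : ∀ i, 0 < γ i) (i : ι) :
    Tendsto (fun t => ω t i) atTop (𝓝 0) := by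
  have hγ₀ : ∀ i, 0 ≤ γ i := fun i => (hγ i).le
  have hsq : Tendsto (fun t => γ i * ω t i ^ 2) atTop (𝓝 0) :=
    squeeze_zero (fun t => by have := hγ₀ i; positivity)
      (fun t => single_le_sum (f := fun j => γ j * ω t j ^ 2)
        (fun j _ => by have := hγ₀ j; positivity) (mem_univ i))
      (hs.tendsto_dissipation hm ha hsym hγ₀)
  refine (tendsto_zero_iff_abs_tendsto_zero _).2 ?_
  simpa [Function.comp_def, (hγ i).ne', sqrt_sq_eq_abs] using (hsq.const_mul (γ i)⁻¹).sqrt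

lemma tendsto_accel (hs : IsInertialKuramotoSolution m γ a θ ω α) (hm : ∀ i, 0 < m i)
    (ha : ∀ i j, 0 ≤ a i j) (hsym : ∀ i j, a i j = a j i) (hγ : ∀ i, 0 < γ i) (i : ι) :
    Tendsto (fun t => α t i) atTop (𝓝 0) := by
  have hγ₀ : ∀ i, 0 ≤ γ i := fun i => (hγ i).le
  have hcos : ∀ j, (fun t => cos (θ t j - θ t i)) =O[atTop] fun _ => (1 : ℝ) := fun j =>
    IsBigO.of_bound 1 (Eventually.of_forall fun t => by simpa using abs_cos_le_one _)
  have hforce' : (fun t => ∑ j, a i j * (cos (θ t j - θ t i) * (ω t j - ω t i))) =O[atTop]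
      fun _ => (1 : ℝ) := by
    refine IsBigO.fun_sum fun j _ => IsBigO.const_mul_left ?_ _
    simpa using (hcos j).mul
      ((hs.isBigO_freq hm ha hsym hγ₀ j).sub (hs.isBigO_freq hm ha hsym hγ₀ i))
  have hfreq : ∀ᶠ t in atTop, HasDerivAt (fun s => ω s i)
      ((m i)⁻¹ * (-γ i * ω t i + couplingForce a (θ t) i)) t := by
    filter_upwards [hs.eventuallyEq_accel hm i] with t ht
    exact ht ▸ hs.hasDerivAt_freq t i
  refine (tendsto_zero_of_hasDerivAt_of_isBigO_deriv hfreq (Eventually.of_forall fun t =>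
    (((hs.hasDerivAt_freq t i).const_mul (-γ i)).add
      (hasDerivAt_couplingForce (hs.hasDerivAt_phase t) i)).const_mul (m i)⁻¹)
    ((((hs.isBigO_accel hm ha hsym hγ₀ i).const_mul_left (-γ i)).add hforce').const_mul_left _)
    (hs.tendsto_freq hm ha hsym hγ i)).congr' (hs.eventuallyEq_accel hm i).symm

end IsInertialKuramotoSolution

theorem kuramoto_heterogeneous_acceleration_decay_general
    (N : ℕ)
    (m γ : Fin N → ℝ) (hm : ∀ i, 0 < m i) (hγ : ∀ i, 0 < γ i)
    (a : Fin N → Fin N → ℝ)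
    (hsym : ∀ i j, a i j = a j i) (hnn : ∀ i j, 0 ≤ a i j)
    (θ : ℝ → Fin N → ℝ)
    (hreg : ∀ i, ContDiff ℝ 2 (fun t => θ t i))
    (hode : ∀ t ≥ (0:ℝ), ∀ i,
      m i * deriv (deriv (fun s => θ s i)) t
        = -γ i * deriv (fun s => θ s i) t
          + ∑ j, a i j * Real.sin (θ t j - θ t i)) :
    ∀ i, Tendsto (fun t => deriv (deriv (fun s => θ s i)) t)
      atTop (nhds 0) := by
  have hs : IsInertialKuramotoSolution m γ a θ (fun t i => deriv (fun s => θ s i) t)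
      (fun t i => deriv (deriv (fun s => θ s i)) t) :=
    { hasDerivAt_phase := fun t i => ((hreg i).differentiable two_ne_zero t).hasDerivAt
      hasDerivAt_freq := fun t i => ((hreg i).differentiable_deriv_two t).hasDerivAt
      ode := hode }
  exact hs.tendsto_accel hm hnn hsym hγ

/-- For the inertial Kuramoto model on a symmetric network with
heterogeneous inertia and friction, the angular accelerations vanish
asymptotically: `θ_i''(t) → 0` as `t → ∞` for each `i`. -/
theorem kuramoto_heterogeneous_acceleration_decay
    (N : ℕ) (hN : 1 ≤ N)
    (m γ : Fin N → ℝ) (hm : ∀ i, 0 < m i) (hγ : ∀ i, 0 < γ i)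
    (a : Fin N → Fin N → ℝ)
    (hsym : ∀ i j, a i j = a j i) (hnn : ∀ i j, 0 ≤ a i j)
    (θ : ℝ → Fin N → ℝ)
    (hreg : ∀ i, ContDiff ℝ 2 (fun t => θ t i))
    (hode : ∀ t ≥ (0:ℝ), ∀ i,
      m i * deriv (deriv (fun s => θ s i)) t
        = -γ i * deriv (fun s => θ s i) t
          + ∑ j, a i j * Real.sin (θ t j - θ t i)) :
    ∀ i, Tendsto (fun t => deriv (deriv (fun s => θ s i)) t)
      atTop (nhds 0) :=
  kuramoto_heterogeneous_acceleration_decay_general N m γ hm hγ a hsym hnn θ hreg hode
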